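/- Let R be a left Ore ring with classical left ring of quotients Q, and assume Q is injective as a left R-module. Then for every finitely generated projective left R-module P: the natural map P → Q ⊗_R P is injective, its image is an essential R-submodule of Q ⊗_R P, and Q ⊗_R P is an injective left R-module; consequently Q ⊗_R P is an injective envelope of P. (For a finite von Neumann algebra A with algebra of affiliated operators U = Q_cl(A), which is injective over A, this gives U ⊗_A P = E(P) for every finitely generated projective A-module P.) -/

import Mathlib

/-!
A finitely generated projective `P` is a direct summand of some `Rⁿ`. Regular elements are
left non-zero-divisors on `Rⁿ`, hence on `P`, so `P → P[S⁻¹]` is injective. Multiplying `p /ₒ s`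
by `s` lands in the image of `P`, which is therefore essential. Localization is an additive
functor, so `P[S⁻¹]` is a direct summand of `Rⁿ[S⁻¹] ≅ Qⁿ`, which is injective.
-/

universe u

open OreLocalization

/-- The submonoid of regular elements (two-sided non-zero-divisors) of a ring. -/
def regulars (R : Type u) [Ring R] : Submonoid R :=
  nonZeroDivisorsLeft R ⊓ nonZeroDivisorsRight R

/-- The natural localization map `M → M[S⁻¹]`, `m ↦ m /ₒ 1`; under the canonical
identification `M[S⁻¹] ≅ Q ⊗_R M` (`Q = R[S⁻¹]`) it is the natural map
`M → Q ⊗_R M`. -/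
def mkLinearMap {R : Type u} [Ring R] {S : Submonoid R} [OreSet S]
    (M : Type u) [AddCommGroup M] [Module R M] :
    M →ₗ[R] OreLocalization S M where
  toFun m := m /ₒ (1 : S)
  map_add' _ _ := (add_oreDiv).symm
  map_smul' r m := by
    simp only [RingHom.id_apply]
    rw [← OreLocalization.smul_div_one, OreLocalization.oreDiv_one_smul]

universe v

theorem Module.Injective.of_leftInverse {R : Type*} [Ring R] {A B : Type v} [AddCommGroup A]
    [Module R A] [AddCommGroup B] [Module R B] [Module.Injective R B] (f : A →ₗ[R] B)
    (g : B →ₗ[R] A) (h : Function.LeftInverse g f) : Module.Injective R A where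
  out _ _ _ _ _ _ i hi φ := by
    obtain ⟨ψ, hψ⟩ := Module.Injective.out i hi (f ∘ₗ φ)
    exact ⟨g ∘ₗ ψ, fun x => by simp [hψ, h _]⟩

namespace OreLocalization

variable {R : Type*} [Ring R] {S : Submonoid R} [OreSet S]
variable {M N : Type*} [AddCommGroup M] [Module R M] [AddCommGroup N] [Module R N]

theorem sum_oreDiv {ι : Type*} (t : Finset ι) (f : ι → M) (s : S) :
    ∑ i ∈ t, f i /ₒ s = (∑ i ∈ t, f i) /ₒ s :=
  (map_sum (AddMonoidHom.mk' (· /ₒ s) fun _ _ => add_oreDiv.symm) f t).symm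

def map (f : M →ₗ[R] N) : OreLocalization S M →ₗ[R] OreLocalization S N where
  toFun := liftExpand (fun m s => f m /ₒ s) fun m t s hts => by
    rw [map_smul, ← OreLocalization.expand]
  map_add' x y := by
    induction x using OreLocalization.ind with | _ m s
    induction y using OreLocalization.ind with | _ m' s'
    simp only [oreDiv_add_oreDiv, liftExpand_of, map_add, Submonoid.smul_def, map_smul]
  map_smul' r x := by
    induction x using OreLocalization.ind with | _ m s
    simp only [smul_oreDiv, liftExpand_of, map_smul, RingHom.id_apply]

@[simp]
theorem map_oreDiv (f : M →ₗ[R] N) (m : M) (s : S) : map f (m /ₒ s) = f m /ₒ s := rfl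

theorem map_leftInverse {f : M →ₗ[R] N} {g : N →ₗ[R] M} (h : g ∘ₗ f = .id) :
    Function.LeftInverse (map (S := S) g) (map f) := by
  intro x
  induction x using OreLocalization.ind with | _ m s
  simp [← LinearMap.comp_apply, h]

-- `(ι → R)[S⁻¹]` is even isomorphic to `ι → R[S⁻¹]`; a retraction suffices.
theorem injective_pi [Module.Injective R (OreLocalization S R)] (ι : Type*) [Fintype ι]
    [DecidableEq ι] : Module.Injective R (OreLocalization S (ι → R)) :=
  .of_leftInverse (LinearMap.pi fun k => map (LinearMap.proj k))
    (∑ k, map (LinearMap.single R (fun _ => R) k) ∘ₗ LinearMap.proj k) fun x => by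
      induction x using OreLocalization.ind with | _ v s
      simp [sum_oreDiv, Finset.univ_sum_single]

end OreLocalization

section

variable {R : Type u} [Ring R] {M : Type u} [AddCommGroup M] [Module R M]

theorem regulars_le_nonZeroDivisorsLeft : regulars R ≤ nonZeroDivisorsLeft R :=
  inf_le_left

theorem eq_zero_of_smul_eq_zero_of_injective_pi {ι : Type*} {g : M →ₗ[R] ι → R}
    (hg : Function.Injective g) {s : R} (hs : s ∈ nonZeroDivisorsLeft R) {m : M}
    (h : s • m = 0) : m = 0 :=
  hg <| by
    rw [map_zero]
    funext k
    exact hs _ (by simpa using congr_fun (congr_arg g h) k)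

variable {S : Submonoid R} [OreSet S]

theorem mkLinearMap_injective (h : ∀ s ∈ S, ∀ m : M, s • m = 0 → m = 0) :
    Function.Injective (mkLinearMap (S := S) M) := by
  refine (injective_iff_map_eq_zero _).2 fun m hm => ?_
  obtain ⟨u, v, hvm, huv⟩ := oreDiv_eq_iff.mp (hm.trans OreLocalization.zero_def)
  simp only [OneMemClass.coe_one, mul_one] at huv
  exact h v (huv ▸ u.2) m (by simpa using hvm.symm)

theorem inf_range_mkLinearMap_ne_bot (L : Submodule R (OreLocalization S M)) (hL : L ≠ ⊥) :
    L ⊓ LinearMap.range (mkLinearMap (S := S) M) ≠ ⊥ := by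
  obtain ⟨x, hxL, hx⟩ := Submodule.exists_mem_ne_zero_of_ne_bot hL
  induction x using OreLocalization.ind with | _ m s
  have hsm : (s : R) • (m /ₒ s) = m /ₒ (1 : S) := by
    rw [← oreDiv_one_smul]
    exact OreLocalization.smul_cancel
  refine (Submodule.ne_bot_iff _).2 ⟨m /ₒ 1, ⟨hsm ▸ L.smul_mem _ hxL, m, rfl⟩, fun h0 => hx ?_⟩
  rw [← one_mul s, ← OreLocalization.one_div_smul, h0, smul_zero]

end

theorem tensor_with_quotient_ring_is_injective_envelope_of_fg_projective
    (R : Type u) [Ring R] [OreSet (regulars R)]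
    -- Q = Q_cl(R) is injective as a left R-module
    (hQ : Module.Injective R (OreLocalization (regulars R) R))
    -- P is a finitely generated projective left R-module
    (P : Type u) [AddCommGroup P] [Module R P]
    [Module.Finite R P] [Module.Projective R P] :
    -- the natural map P → Q ⊗_R P is injective,
    Function.Injective (mkLinearMap (R := R) (S := regulars R) P) ∧
    -- its image is an essential submodule of Q ⊗_R P,
    (∀ L : Submodule R (OreLocalization (regulars R) P), L ≠ ⊥ →
      L ⊓ LinearMap.range (mkLinearMap (R := R) (S := regulars R) P) ≠ ⊥) ∧
    -- and Q ⊗_R P is an injective R-module; hence Q ⊗_R P = E(P)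
    Module.Injective R (OreLocalization (regulars R) P) := by
  obtain ⟨n, π, g, -, hg, hπg⟩ := Module.Finite.exists_comp_eq_id_of_projective R P
  refine ⟨mkLinearMap_injective fun s hs _ hp =>
      eq_zero_of_smul_eq_zero_of_injective_pi hg (regulars_le_nonZeroDivisorsLeft hs) hp,
    inf_range_mkLinearMap_ne_bot, ?_⟩
  have := OreLocalization.injective_pi (S := regulars R) (Fin n)
  exact .of_leftInverse (OreLocalization.map g) (OreLocalization.map π)
    (OreLocalization.map_leftInverse hπg)
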